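/- Let λ ≥ 0, α ∈ (0,1), and consider the bilinear form a_λ(u,φ) = (₀∂_t^α u, φ)_{L²(0,T)} + λ(u,φ)_{L²(0,T)} on H̃_L^α(0,T) × L²(0,T). Assuming (₀∂_t^α v, v)_{L²(0,T)} ≥ 0 for all v ∈ H̃_L^α(0,T), then for every v ∈ H̃_L^α(0,T): ‖₀∂_t^α v‖_{L²(0,T)} + λ‖v‖_{L²(0,T)} ≤ 2 sup_{φ ∈ L²(0,T), φ≠0} a_λ(v,φ)/‖φ‖_{L²(0,T)}. -/

import Mathlib

open MeasureTheory Set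

/-- Left-sided Riemann–Liouville fractional integral of order `γ`. -/
noncomputable def RLint (γ : ℝ) (u : ℝ → ℝ) (t : ℝ) : ℝ :=
  (Real.Gamma γ)⁻¹ * ∫ s in (0:ℝ)..t, (t - s) ^ (γ - 1) * u s

/-- Left Riemann–Liouville fractional derivative `₀∂_t^α v = d/dt (₀I^{1-α} v)`. -/
noncomputable def RLd (α : ℝ) (v : ℝ → ℝ) : ℝ → ℝ :=
  deriv (RLint (1 - α) v)

/-- The `L²(0,T)` norm. -/
noncomputable def l2 (T : ℝ) (f : ℝ → ℝ) : ℝ :=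
  (∫ t in Set.Ioc (0:ℝ) T, f t ^ 2) ^ ((1:ℝ)/2)

/-- The bilinear form `a_λ(v,φ) = (₀∂_t^α v, φ)_{L²(0,T)} + λ (v,φ)_{L²(0,T)}`. -/
noncomputable def aForm (T lam α : ℝ) (v φ : ℝ → ℝ) : ℝ :=
  (∫ t in Set.Ioc (0:ℝ) T, RLd α v t * φ t) + lam * ∫ t in Set.Ioc (0:ℝ) T, v t * φ t

/-- Membership in `H^α(ℝ)` via the Fourier transform. -/
def MemHalpha (α : ℝ) (w : ℝ → ℝ) : Prop :=
  MemLp w 2 (volume : Measure ℝ) ∧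
  Integrable (fun ξ : ℝ =>
    (1 + ξ ^ 2) ^ α * ‖VectorFourier.fourierIntegral Real.fourierChar (volume : Measure ℝ) (innerₗ ℝ) (fun t => (w t : ℂ)) ξ‖ ^ 2)

/-- `v ∈ H̃_L^α(0,T)`: extension by zero to `t ≤ 0` lies in `H^α(-∞,T)`. -/
def TildeHL (α T : ℝ) (v : ℝ → ℝ) : Prop :=
  ∃ w : ℝ → ℝ, MemHalpha α w ∧ (∀ t ∈ Set.Ioo (0:ℝ) T, w t = v t) ∧ ∀ t ≤ (0:ℝ), w t = 0

/-!
With `φ = ₀∂_t^α v + λ v`, the form is `a_λ(v, φ) = ‖φ‖²` in `L²(0,T)`. Since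
`(₀∂_t^α v, λ v) ≥ 0`, expanding `‖φ‖²` gives `(‖₀∂_t^α v‖ + λ‖v‖)² ≤ 2‖φ‖²`, hence the bound
(even with `√2` in place of `2`). If `φ = 0` in `L²`, then `a_λ(v, ·)` vanishes and both norms on
the left are zero, so any nonzero test function such as `1` will do.
-/

theorem norm_add_norm_le_two_mul_norm_add_of_inner_nonneg {E : Type*} [NormedAddCommGroup E]
    [InnerProductSpace ℝ E] {x y : E} (h : 0 ≤ inner ℝ x y) : ‖x‖ + ‖y‖ ≤ 2 * ‖x + y‖ := by
  have hsq : (‖x‖ + ‖y‖) ^ 2 ≤ 2 * ‖x + y‖ ^ 2 := by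
    rw [norm_add_sq_real]
    nlinarith [sq_nonneg (‖x‖ - ‖y‖)]
  nlinarith [norm_nonneg x, norm_nonneg y, norm_nonneg (x + y)]

theorem MeasureTheory.MemLp.integral_mul_eq_inner_toLp {α : Type*} [MeasurableSpace α]
    {μ : Measure α} {f g : α → ℝ} (hf : MemLp f 2 μ) (hg : MemLp g 2 μ) :
    ∫ a, f a * g a ∂μ = inner ℝ (hf.toLp f) (hg.toLp g) := by
  rw [L2.inner_def]
  refine integral_congr_ae ?_
  filter_upwards [hf.coeFn_toLp, hg.coeFn_toLp] with a hfa hga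
  simp [hfa, hga, mul_comm]

theorem l2_eq_norm_toLp {T : ℝ} {f : ℝ → ℝ} (hf : MemLp f 2 (volume.restrict (Ioc 0 T))) :
    l2 T f = ‖hf.toLp f‖ := by
  have hsq : ∫ t in Ioc (0:ℝ) T, f t ^ 2 = ‖hf.toLp f‖ ^ 2 := by
    simp only [sq, hf.integral_mul_eq_inner_toLp hf, real_inner_self_eq_norm_mul_norm]
  rw [l2, hsq, ← Real.sqrt_eq_rpow, Real.sqrt_sq (norm_nonneg _)]

theorem l2_one_ne_zero {T : ℝ} (hT : 0 < T) : l2 T (fun _ => 1) ≠ 0 := by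
  have : l2 T (fun _ => (1:ℝ)) = T ^ ((1:ℝ)/2) := by
    simp [l2, hT.le]
  rw [this]
  positivity

theorem aForm_eq_inner_toLp {T lam α : ℝ} {v ψ : ℝ → ℝ}
    (hv : MemLp v 2 (volume.restrict (Ioc 0 T)))
    (hd : MemLp (RLd α v) 2 (volume.restrict (Ioc 0 T)))
    (hψ : MemLp ψ 2 (volume.restrict (Ioc 0 T))) :
    aForm T lam α v ψ = inner ℝ (hd.toLp (RLd α v) + lam • hv.toLp v) (hψ.toLp ψ) := by
  rw [aForm, hd.integral_mul_eq_inner_toLp hψ, hv.integral_mul_eq_inner_toLp hψ,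
    inner_add_left, real_inner_smul_left]

theorem stmt11_general (T lam α : ℝ) (hT : 0 < T) (hlam : 0 ≤ lam)
    (hpos : ∀ w : ℝ → ℝ, TildeHL α T w →
      0 ≤ ∫ t in Set.Ioc (0:ℝ) T, RLd α w t * w t)
    (v : ℝ → ℝ) (hv : TildeHL α T v)
    (hvL2 : MemLp v 2 (volume.restrict (Set.Ioc 0 T)))
    (hdL2 : MemLp (RLd α v) 2 (volume.restrict (Set.Ioc 0 T))) :
    ∃ φ : ℝ → ℝ, MemLp φ 2 (volume.restrict (Set.Ioc 0 T)) ∧ l2 T φ ≠ 0 ∧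
      l2 T (RLd α v) + lam * l2 T v ≤ 2 * (aForm T lam α v φ / l2 T φ) := by
  set Φ := hdL2.toLp (RLd α v) + lam • hvL2.toLp v
  have hbound : l2 T (RLd α v) + lam * l2 T v ≤ 2 * ‖Φ‖ := by
    have hinner : 0 ≤ inner ℝ (hdL2.toLp (RLd α v)) (lam • hvL2.toLp v) := by
      rw [real_inner_smul_right, ← hdL2.integral_mul_eq_inner_toLp hvL2]
      exact mul_nonneg hlam (hpos v hv)
    have := norm_add_norm_le_two_mul_norm_add_of_inner_nonneg hinner
    rwa [norm_smul, Real.norm_of_nonneg hlam, ← l2_eq_norm_toLp, ← l2_eq_norm_toLp] at this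
  have haForm {ψ : ℝ → ℝ} (hψ : MemLp ψ 2 (volume.restrict (Ioc 0 T))) :
      aForm T lam α v ψ = inner ℝ Φ (hψ.toLp ψ) :=
    aForm_eq_inner_toLp hvL2 hdL2 hψ
  by_cases hΦ : Φ = 0
  · refine ⟨fun _ => 1, memLp_const 1, l2_one_ne_zero hT, ?_⟩
    rw [haForm (memLp_const 1), hΦ, inner_zero_left, zero_div]
    simpa [hΦ] using hbound
  · have hφ : MemLp (⇑Φ) 2 (volume.restrict (Ioc 0 T)) := Lp.memLp Φ
    have hφΦ : hφ.toLp Φ = Φ := Lp.toLp_coeFn Φ hφ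
    refine ⟨Φ, hφ, ?_, ?_⟩
    · rwa [l2_eq_norm_toLp hφ, hφΦ, norm_ne_zero_iff]
    · rw [haForm hφ, l2_eq_norm_toLp hφ, hφΦ,
        real_inner_self_eq_norm_sq, sq, mul_div_assoc, div_self (norm_ne_zero_iff.mpr hΦ), mul_one]
      exact hbound

/-- Inf-sup inequality for the fractional ODE bilinear form `a_λ`: assuming
nonnegativity of `(₀∂_t^α v, v)`, every `v ∈ H̃_L^α(0,T)` satisfies
`‖₀∂_t^α v‖ + λ‖v‖ ≤ 2 sup_{φ ≠ 0} a_λ(v,φ)/‖φ‖`. -/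
theorem stmt11 (T lam α : ℝ) (hT : 0 < T) (hlam : 0 ≤ lam) (hα : α ∈ Set.Ioo (0:ℝ) 1)
    (hpos : ∀ w : ℝ → ℝ, TildeHL α T w →
      0 ≤ ∫ t in Set.Ioc (0:ℝ) T, RLd α w t * w t)
    (v : ℝ → ℝ) (hv : TildeHL α T v)
    (hvL2 : MemLp v 2 (volume.restrict (Set.Ioc 0 T)))
    (hdL2 : MemLp (RLd α v) 2 (volume.restrict (Set.Ioc 0 T))) :
    ∃ φ : ℝ → ℝ, MemLp φ 2 (volume.restrict (Set.Ioc 0 T)) ∧ l2 T φ ≠ 0 ∧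
      l2 T (RLd α v) + lam * l2 T v ≤ 2 * (aForm T lam α v φ / l2 T φ) :=
  stmt11_general T lam α hT hlam hpos v hv hvL2 hdL2
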